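/- Let $M:[0,\infty)\to[0,\infty)$ be continuous and $\gamma>1$ such that $t\mapsto M(t)/t^{\gamma-1}$ is non-increasing on $(0,\infty)$. Then the map $t\mapsto \gamma\hat M(t) - M(t)t$ is non-decreasing on $(0,\infty)$. -/
import Mathlib


open Set MeasureTheory intervalIntegral

theorem stmt_2 (M : ℝ → ℝ) (hMc : ContinuousOn M (Set.Ici 0))
    (hMnn : ∀ t ≥ (0:ℝ), 0 ≤ M t) (γ : ℝ) (hγ : 1 < γ)
    (hmono : ∀ t₁ t₂ : ℝ, 0 < t₁ → t₁ ≤ t₂ → M t₂ / t₂ ^ (γ - 1) ≤ M t₁ / t₁ ^ (γ - 1))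
    (Mhat : ℝ → ℝ) (hMhat : ∀ t, Mhat t = ∫ s in (0:ℝ)..t, M s) :
    MonotoneOn (fun t => γ * Mhat t - M t * t) (Set.Ioi 0) := by
  intro a ha b hb hab
  simp only [Set.mem_Ioi] at ha hb
  simp only [hMhat]
  have hγ0 : (0:ℝ) < γ := by linarith
  have hb0 : (0:ℝ) < b := hb
  have ha0 : (0:ℝ) < a := ha
  have hInt0a : IntervalIntegrable M volume 0 a := by
    apply ContinuousOn.intervalIntegrable
    apply hMc.mono
    rw [Set.uIcc_of_le ha0.le]
    exact fun x hx => hx.1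
  have hIntab : IntervalIntegrable M volume a b := by
    apply ContinuousOn.intervalIntegrable
    apply hMc.mono
    rw [Set.uIcc_of_le hab]
    exact fun x hx => le_trans ha0.le hx.1
  have hsplit : (∫ s in (0:ℝ)..b, M s) = (∫ s in (0:ℝ)..a, M s) + ∫ s in a..b, M s :=
    (intervalIntegral.integral_add_adjacent_intervals hInt0a hIntab).symm
  set c : ℝ := M b / b ^ (γ - 1) with hc
  have hbp : (0:ℝ) < b ^ (γ - 1) := Real.rpow_pos_of_pos hb0 _
  have hap : (0:ℝ) < a ^ (γ - 1) := Real.rpow_pos_of_pos ha0 _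
  have hIntg : IntervalIntegrable (fun s => c * s ^ (γ - 1)) volume a b := by
    apply ContinuousOn.intervalIntegrable
    apply ContinuousOn.mul continuousOn_const
    intro x hx
    rw [Set.uIcc_of_le hab] at hx
    exact (Real.continuousAt_rpow_const x _ (Or.inl (ha0.trans_le hx.1).ne')).continuousWithinAt
  have hkey : (∫ s in a..b, c * s ^ (γ - 1)) ≤ ∫ s in a..b, M s := by
    apply intervalIntegral.integral_mono_on hab hIntg hIntab
    intro s hs
    have hs0 : 0 < s := lt_of_lt_of_le ha0 hs.1
    have hsp : (0:ℝ) < s ^ (γ - 1) := Real.rpow_pos_of_pos hs0 _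
    have := hmono s b hs0 hs.2
    calc c * s ^ (γ - 1) ≤ (M s / s ^ (γ - 1)) * s ^ (γ - 1) := by
          exact mul_le_mul_of_nonneg_right this hsp.le
      _ = M s := div_mul_cancel₀ _ hsp.ne'
  have hval : (∫ s in a..b, c * s ^ (γ - 1)) = c * ((b ^ γ - a ^ γ) / γ) := by
    rw [intervalIntegral.integral_const_mul, integral_rpow (Or.inl (by linarith))]
    norm_num
  have h2 : c * b ^ (γ - 1) = M b := div_mul_cancel₀ _ hbp.ne'
  have h3 : b ^ γ = b ^ (γ - 1) * b := by
    rw [← Real.rpow_add_one hb0.ne']; ring_nf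
  have h4 : a ^ γ = a ^ (γ - 1) * a := by
    rw [← Real.rpow_add_one ha0.ne']; ring_nf
  have h5 : c ≤ M a / a ^ (γ - 1) := hmono a b ha0 hab
  have h6 : (M a / a ^ (γ - 1)) * a ^ (γ - 1) = M a := div_mul_cancel₀ _ hap.ne'
  have h7 : c * (a ^ (γ - 1) * a) ≤ M a * a := by
    calc c * (a ^ (γ - 1) * a) ≤ (M a / a ^ (γ - 1)) * (a ^ (γ - 1) * a) := by
          apply mul_le_mul_of_nonneg_right h5; positivity
      _ = M a * a := by rw [← mul_assoc, h6]
  have hfinal : M b * b - M a * a ≤ γ * ∫ s in a..b, M s := by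
    have h8 : γ * (c * ((b ^ γ - a ^ γ) / γ)) ≤ γ * ∫ s in a..b, M s := by
      rw [← hval]; exact mul_le_mul_of_nonneg_left hkey hγ0.le
    have h9 : γ * (c * ((b ^ γ - a ^ γ) / γ)) = c * (b ^ γ - a ^ γ) := by
      field_simp
    rw [h9, h3, h4] at h8
    nlinarith [h8, h7, h2]
  rw [hsplit]
  linarith
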